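/- Let ζ, η be independent nonnegative random variables. If the support of the distribution of the sum ζ + η is contained in a set a + bℤ for some reals a, b, then there exist reals a₁, b₁ such that both supports of ζ and η are contained in translates of b₁ℤ with the same span; equivalently, if the union of the supports of ζ and η is not contained in any set a + bℤ, then ζ + η is nonlattice. -/

import Mathlib

open Set MeasureTheory ProbabilityTheory

/-! By independence the joint law of `(ζ, η)` is the product of the marginals, so by Fubini
some value `x₀` of `ζ` satisfies `x₀ + η ∈ a + bℤ` almost surely. Then `η ∈ (a - x₀) + bℤ`
and `ζ = (ζ + η) - η ∈ x₀ + bℤ` almost surely. -/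

theorem ProbabilityTheory.IndepFun.ae_map_ae_of_ae {Ω α β : Type*} [MeasurableSpace Ω]
    [MeasurableSpace α] [MeasurableSpace β] {P : Measure Ω} [IsFiniteMeasure P]
    {X : Ω → α} {Y : Ω → β} (hX : AEMeasurable X P) (hY : AEMeasurable Y P)
    (hXY : IndepFun X Y P) {p : α × β → Prop} (hp : MeasurableSet {q | p q})
    (h : ∀ᵐ ω ∂P, p (X ω, Y ω)) :
    ∀ᵐ x ∂P.map X, ∀ᵐ ω ∂P, p (x, Y ω) := by
  have hprod : ∀ᵐ q ∂(P.map X).prod (P.map Y), p q := by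
    rw [← (indepFun_iff_map_prod_eq_prod_map_map hX hY).mp hXY]
    exact (ae_map_iff (hX.prodMk hY) hp).mpr h
  filter_upwards [Measure.ae_ae_of_ae_prod hprod] with x hx
  exact ae_of_ae_map hY hx

theorem lattice_sum_of_indep_general {Ω : Type*} [MeasurableSpace Ω]
    (P : Measure Ω) [IsProbabilityMeasure P]
    (ζ η : Ω → ℝ) (hζ : Measurable ζ) (hη : Measurable η)
    (hindep : IndepFun ζ η P)
    (a b : ℝ) (hb : b ≠ 0)
    (hsum : ∀ᵐ ω ∂P, ∃ n : ℤ, ζ ω + η ω = a + b * n) :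
    ∃ a₁ a₂ b₁ : ℝ, b₁ ≠ 0 ∧
      (∀ᵐ ω ∂P, ∃ n : ℤ, ζ ω = a₁ + b₁ * n) ∧
      (∀ᵐ ω ∂P, ∃ n : ℤ, η ω = a₂ + b₁ * n) := by
  have hlattice : MeasurableSet {q : ℝ × ℝ | q.1 + q.2 ∈ range fun n : ℤ => a + b * n} :=
    (countable_range _).measurableSet.preimage (measurable_fst.add measurable_snd)
  have hsum' : ∀ᵐ ω ∂P, ζ ω + η ω ∈ range fun n : ℤ => a + b * n :=
    hsum.mono fun ω ⟨n, hn⟩ => ⟨n, hn.symm⟩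
  have := Measure.isProbabilityMeasure_map (μ := P) hζ.aemeasurable
  obtain ⟨x₀, hx₀⟩ :=
    (hindep.ae_map_ae_of_ae hζ.aemeasurable hη.aemeasurable hlattice hsum').exists
  refine ⟨x₀, a - x₀, b, hb, ?_, ?_⟩
  · filter_upwards [hsum, hx₀] with ω ⟨n, hn⟩ ⟨m, hm⟩
    exact ⟨n - m, by push_cast; linarith⟩
  · filter_upwards [hx₀] with ω ⟨m, hm⟩
    exact ⟨m, by linarith⟩

/-- If `ζ` and `η` are independent nonnegative random variables and the sum `ζ + η` is
lattice (its support lies in some `a + bℤ`, `b ≠ 0`), then `ζ` and `η` are themselves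
supported in translates `a₁ + b₁ℤ` and `a₂ + b₁ℤ` of a common lattice `b₁ℤ`. -/
theorem lattice_sum_of_indep {Ω : Type*} [MeasurableSpace Ω]
    (P : Measure Ω) [IsProbabilityMeasure P]
    (ζ η : Ω → ℝ) (hζ : Measurable ζ) (hη : Measurable η)
    (hζ0 : ∀ ω, 0 ≤ ζ ω) (hη0 : ∀ ω, 0 ≤ η ω)
    (hindep : IndepFun ζ η P)
    (a b : ℝ) (hb : b ≠ 0)
    (hsum : ∀ᵐ ω ∂P, ∃ n : ℤ, ζ ω + η ω = a + b * n) :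
    ∃ a₁ a₂ b₁ : ℝ, b₁ ≠ 0 ∧
      (∀ᵐ ω ∂P, ∃ n : ℤ, ζ ω = a₁ + b₁ * n) ∧
      (∀ᵐ ω ∂P, ∃ n : ℤ, η ω = a₂ + b₁ * n) :=
  lattice_sum_of_indep_general P ζ η hζ hη hindep a b hb hsum
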